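/- G has no subgroup of index 2, no subgroup of index 3, and no subgroup of index 4. (Equivalently, the Weber–Seifert dodecahedral space has no connected covers of degree 2, 3, or 4.) -/

import Mathlib

/-- Generators of the fundamental group of the Weber–Seifert dodecahedral space. -/
inductive Gen : Type
  | u | v | w | x | y | z
  deriving DecidableEq

open FreeGroup in
/-- The six relators of the Weber–Seifert presentation. -/
def wsRels : Set (FreeGroup Gen) :=
  { of .u * of .x * (of .y)⁻¹ * (of .v)⁻¹ * of .w,
    of .u * of .y * (of .z)⁻¹ * (of .w)⁻¹ * of .x,
    of .u * of .z * (of .v)⁻¹ * (of .x)⁻¹ * of .y,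
    of .u * of .v * (of .w)⁻¹ * (of .y)⁻¹ * of .z,
    of .u * of .w * (of .x)⁻¹ * (of .z)⁻¹ * of .v,
    of .v * of .x * of .z * of .w * of .y }

/-- The fundamental group of the Weber–Seifert hyperbolic dodecahedral space. -/
abbrev G : Type := PresentedGroup wsRels

def u : G := PresentedGroup.of Gen.u
def v : G := PresentedGroup.of Gen.v
def w : G := PresentedGroup.of Gen.w
def x : G := PresentedGroup.of Gen.x
def y : G := PresentedGroup.of Gen.y
def z : G := PresentedGroup.of Gen.z

/-! The abelianization of `G` has exponent 5: in it, five times each generator is a signed sum of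
five of the six relators. Hence `G` has no nontrivial homomorphism to a solvable group of order prime
to 5, since such a homomorphism would land in every term of the derived series. A subgroup of index
`k ≤ 4` yields the action of `G` on its `k` cosets, a homomorphism to `S_k`, which is solvable of
order `k!` prime to 5; so the action is trivial and the subgroup is all of `G`. -/

theorem alternatingGroup.isSolvable_of_card_eq_four {α : Type*} [DecidableEq α] [Fintype α]
    (hα : Nat.card α = 4) : Group.IsSolvable (alternatingGroup α) :=
  have := Group.isSolvable_of_comm
    (mul_comm_of_exponent_two (G := kleinFour α) (exponent_kleinFour_of_card_eq_four hα))
  Group.isSolvable_of_ker_le_range (kleinFour α).subtype Abelianization.of <| by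
    rw [Abelianization.ker_of, ← kleinFour_eq_commutator hα, Subgroup.range_subtype]

theorem Equiv.Perm.isSolvable_of_card_eq_four {α : Type*} [DecidableEq α] [Fintype α]
    (hα : Nat.card α = 4) : Group.IsSolvable (Perm α) :=
  have := alternatingGroup.isSolvable_of_card_eq_four hα
  Group.isSolvable_of_ker_le_range (alternatingGroup α).subtype sign
    (Subgroup.range_subtype _).ge

theorem Equiv.Perm.isSolvable_of_card_le_four {α : Type*} [Finite α] (hα : Nat.card α ≤ 4) :
    Group.IsSolvable (Perm α) := by
  have := Perm.isSolvable_of_card_eq_four (α := Fin 4) (by simp)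
  have := Fintype.ofFinite α
  obtain ⟨ι⟩ : Nonempty (α ↪ Fin 4) := Function.Embedding.nonempty_of_card_le <| by
    rwa [Fintype.card_fin, ← Nat.card_eq_fintype_card]
  exact Group.isSolvable_of_isSolvable_injective (Perm.viaEmbeddingHom_injective ι)

section

variable {Γ L : Type*} [Group Γ] [Group L]

theorem MonoidHom.range_le_derivedSeries_of_pow_mem_commutator {n : ℕ}
    (hn : n.Coprime (Nat.card L)) (hΓ : ∀ g : Γ, g ^ n ∈ commutator Γ) (φ : Γ →* L) (k : ℕ) :
    φ.range ≤ derivedSeries L k := by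
  induction k with
  | zero => exact le_top
  | succ k ih =>
    let N := derivedSeries L (k + 1)
    have hcomm : (commutator Γ).map φ ≤ N := by
      rw [commutator_def, Subgroup.map_commutator, ← MonoidHom.range_eq_map]
      exact (Subgroup.commutator_mono ih ih).trans (derivedSeries_succ L k).ge
    rintro _ ⟨g, rfl⟩
    have hpow : (φ g : L ⧸ N) ^ n = 1 := by
      rw [← QuotientGroup.mk_pow, ← map_pow, QuotientGroup.eq_one_iff]
      exact hcomm ⟨_, hΓ g, rfl⟩
    have hord : orderOf (φ g : L ⧸ N) = 1 :=
      Nat.eq_one_of_dvd_coprimes hn (orderOf_dvd_of_pow_eq_one hpow)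
        ((orderOf_dvd_natCard _).trans N.card_quotient_dvd_card)
    rwa [orderOf_eq_one_iff, QuotientGroup.eq_one_iff] at hord

theorem MonoidHom.eq_one_of_pow_mem_commutator [Group.IsSolvable L] {n : ℕ}
    (hn : n.Coprime (Nat.card L)) (hΓ : ∀ g : Γ, g ^ n ∈ commutator Γ) (φ : Γ →* L) :
    φ = 1 := by
  obtain ⟨k, hk⟩ := Group.IsSolvable.solvable (G := L)
  ext g
  simpa [hk] using φ.range_le_derivedSeries_of_pow_mem_commutator hn hΓ k ⟨g, rfl⟩

theorem Subgroup.eq_top_of_pow_mem_commutator_of_index_le_four {p : ℕ} (hp : p.Prime)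
    (hΓ : ∀ g : Γ, g ^ p ∈ _root_.commutator Γ) {K : Subgroup Γ} (hK₀ : K.index ≠ 0)
    (hKp : K.index < p) (hK₄ : K.index ≤ 4) : K = ⊤ := by
  have : Finite (Γ ⧸ K) := Nat.finite_of_card_ne_zero hK₀
  have := Equiv.Perm.isSolvable_of_card_le_four hK₄
  have hcop : p.Coprime (Nat.card (Equiv.Perm (Γ ⧸ K))) := by
    rw [Nat.card_perm, hp.coprime_iff_not_dvd, hp.dvd_factorial, not_le]
    exact hKp
  have hact := (MulAction.toPermHom Γ (Γ ⧸ K)).eq_one_of_pow_mem_commutator hcop hΓ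
  refine top_le_iff.mp ?_
  calc ⊤ = (MulAction.toPermHom Γ (Γ ⧸ K)).ker := by rw [hact, MonoidHom.ker_one]
    _ = K.normalCore := K.normalCore_eq_ker.symm
    _ ≤ K := K.normalCore_le

end

theorem pow_five_eq_one_of_wsRels {A : Type*} [CommGroup A] (f : FreeGroup Gen →* A)
    (hf : ∀ r ∈ wsRels, f r = 1) (i : Gen) : f (.of i) ^ 5 = 1 := by
  replace hf : ∀ r ∈ wsRels, Additive.ofMul (f r) = 0 := fun r hr ↦ by rw [hf r hr, ofMul_one]
  simp only [wsRels, Set.forall_mem_insert, Set.mem_singleton_iff, forall_eq, map_mul, map_inv,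
    ofMul_mul, ofMul_inv] at hf
  obtain ⟨r₁, r₂, r₃, r₄, r₅, r₆⟩ := hf
  rw [← ofMul_eq_zero, ofMul_pow]
  cases i
  · linear_combination (norm := module) r₁ + r₂ + r₃ + r₄ + r₅
  · linear_combination (norm := module) -r₁ - r₃ + r₄ + r₅ + r₆
  · linear_combination (norm := module) r₁ - r₂ - r₄ + r₅ + r₆
  · linear_combination (norm := module) r₁ + r₂ - r₃ - r₅ + r₆
  · linear_combination (norm := module) -r₁ + r₂ + r₃ - r₄ + r₆
  · linear_combination (norm := module) -r₂ + r₃ + r₄ - r₅ + r₆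

theorem pow_five_mem_commutator (g : G) : g ^ 5 ∈ commutator G := by
  suffices (powMonoidHom 5).comp Abelianization.of = (1 : G →* Abelianization G) by
    rw [← Abelianization.ker_of, MonoidHom.mem_ker, map_pow]
    exact DFunLike.congr_fun this g
  refine PresentedGroup.ext fun i ↦
    pow_five_eq_one_of_wsRels (Abelianization.of.comp (PresentedGroup.mk wsRels)) (fun r hr ↦ ?_) i
  rw [MonoidHom.comp_apply, PresentedGroup.one_of_mem hr, map_one]

/-- `G` has no subgroup of index 2, 3, or 4. -/
theorem ws_no_small_index_subgroups (K : Subgroup G) :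
    K.index ≠ 2 ∧ K.index ≠ 3 ∧ K.index ≠ 4 := by
  have hK : K.index ≠ 0 → K.index ≤ 4 → K.index = 1 := fun h₀ h₄ ↦ by
    rw [K.eq_top_of_pow_mem_commutator_of_index_le_four Nat.prime_five pow_five_mem_commutator h₀
      (by omega) h₄, Subgroup.index_top]
  omega
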